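/- Let k be a field. The dualization functor from the opposite of the category of k-vector spaces to the category of k-vector spaces, sending a vector space X to its dual X* = Hom_k(X,k) and a linear map f : X → Y to its transpose f* : Y* → X*, is a monadic right adjoint: it has a left adjoint (the opposite of dualization, via the self-adjointness of dualization on the right), and the comparison functor from (Vect k)^op to the Eilenberg–Moore category of the induced double-dualization monad on Vect k is an equivalence. -/

import Mathlib

open CategoryTheory

universe u

/-- The dualization functor `(Vect k)ᵒᵖ ⥤ Vect k`, sending a vector space `X` to its dual
`X* = Hom_k(X, k)` and a linear map to its transpose. -/
def dualizationFunctor (k : Type u) [Field k] : (ModuleCat.{u} k)ᵒᵖ ⥤ ModuleCat.{u} k where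
  obj X := ModuleCat.of k (Module.Dual k X.unop)
  map f := ModuleCat.ofHom (f.unop.hom.dualMap)
  map_id X := ModuleCat.hom_ext (LinearMap.ext fun φ => rfl)
  map_comp f g := ModuleCat.hom_ext (LinearMap.ext fun φ => rfl)

namespace Stmt18Aux

open CategoryTheory.Limits

variable (k : Type u) [Field k]

/-- The self-adjunction of dualization: the opposite of dualization is left adjoint to
dualization. -/
def dualAdj : (dualizationFunctor k).rightOp ⊣ dualizationFunctor k :=
  Adjunction.mkOfHomEquiv
  { homEquiv := fun X Y =>
      { toFun := fun f => ModuleCat.ofHom f.unop.hom.flip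
        invFun := fun g => Quiver.Hom.op
          (ModuleCat.ofHom g.hom.flip :
            (Y.unop : ModuleCat k) ⟶ (dualizationFunctor k).obj (Opposite.op X))
        left_inv := fun f => rfl
        right_inv := fun g => rfl }
    homEquiv_naturality_left_symm := fun f g => rfl
    homEquiv_naturality_right := fun f g => rfl }

instance : (dualizationFunctor k).ReflectsIsomorphisms where
  reflects {X Y} f hf := by
    have hb := ConcreteCategory.bijective_of_isIso ((dualizationFunctor k).map f)
    have : Function.Bijective f.unop.hom :=
      (LinearMap.dualMap_bijective_iff (f := f.unop.hom)).mp hb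
    have : IsIso f.unop := by
      rw [ConcreteCategory.isIso_iff_bijective]; exact this
    exact (inferInstance : IsIso f.unop.op)

instance : CategoryTheory.Injective (ModuleCat.of k k) where
  factors {X Y} g f m := by
    obtain ⟨r, hr⟩ := f.hom.exists_leftInverse_of_injective
      (LinearMap.ker_eq_bot.mpr ((ModuleCat.mono_iff_injective f).mp m))
    exact ⟨ModuleCat.ofHom (g.hom.comp r), by
      ext x
      exact congrArg g.hom (congrFun (congrArg DFunLike.coe hr) x)⟩

noncomputable instance : PreservesFiniteColimits (preadditiveYoneda.obj (ModuleCat.of k k)) := by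
  show PreservesFiniteColimits (preadditiveYonedaObj (ModuleCat.of k k) ⋙ forget₂ _ AddCommGrpCat)
  have h1 : PreservesFiniteColimits (preadditiveYonedaObj (ModuleCat.of k k)) := inferInstance
  have h2 : PreservesFiniteColimits (forget₂ (ModuleCat.{u} (End (ModuleCat.of k k))) AddCommGrpCat.{u}) :=
    PreservesColimitsOfSize.preservesFiniteColimits.{u} _
  exact comp_preservesFiniteColimits _ _

/-- Dualization composed with the forgetful functor to abelian groups is the additive Yoneda
functor of `k`. -/
def dualCompIso : dualizationFunctor k ⋙ forget₂ (ModuleCat.{u} k) AddCommGrpCat.{u}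
    ≅ preadditiveYoneda.obj (ModuleCat.of k k) :=
  NatIso.ofComponents (fun X => (ModuleCat.homAddEquiv (M := X.unop)
    (N := ModuleCat.of k k)).symm.toAddCommGrpIso) (fun f => rfl)

noncomputable instance : PreservesFiniteColimits (dualizationFunctor k) := by
  have h1 : PreservesFiniteColimits
      (dualizationFunctor k ⋙ forget₂ (ModuleCat.{u} k) AddCommGrpCat.{u}) :=
    preservesFiniteColimits_of_natIso (dualCompIso k).symm
  have : ReflectsColimits (forget₂ (ModuleCat.{u} k) AddCommGrpCat.{u}) :=
    reflectsColimits_of_reflectsIsomorphisms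
  constructor
  intro J _ _
  constructor
  intro K
  exact preservesColimit_of_reflects_of_preserves _ (forget₂ (ModuleCat.{u} k) AddCommGrpCat.{u})

noncomputable instance : Monad.PreservesColimitOfIsReflexivePair (dualizationFunctor k) where
  out _ _ _ := inferInstance

end Stmt18Aux

/-- The dualization functor from the opposite of the category of `k`-vector spaces to the
category of `k`-vector spaces is a monadic right adjoint: it has a left adjoint, and the
comparison functor from `(Vect k)ᵒᵖ` to the Eilenberg–Moore category of the induced
double-dualization monad is an equivalence. -/
theorem stmt18 (k : Type u) [Field k] :
    Nonempty (MonadicRightAdjoint (dualizationFunctor k)) := by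
  exact ⟨Monad.monadicOfHasPreservesReflexiveCoequalizersOfReflectsIsomorphisms
    (Stmt18Aux.dualAdj k)⟩
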